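/- arXiv:2510.15099 — 4 statements merged into one kernel-verified Lean document; each statement's English description precedes it below -/
import Mathlib

section
/- For every even index i with i ≥ 2, the ABR base satisfies B_i = 2^i. -/
/-- The ABR base sequence: B 0 = 2, B 1 = 3, and for i ≥ 2,
    B i = 2^(i+1) - 1 - ∑_{j odd, j < i} B j. -/
def abrB : ℕ → ℕ
  | 0 => 2
  | 1 => 3
  | n + 2 =>
      2 ^ (n + 3) - 1 -
        ∑ j ∈ ((Finset.range (n + 2)).filter fun j => j % 2 = 1).attach, abrB j.1
  decreasing_by
    exact Finset.mem_range.mp (Finset.mem_filter.mp j.2).1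

/-- Extend a length-`n` bit string to all of ℕ by zeros. -/
def extBits (n : ℕ) (d : Fin n → Bool) : ℕ → Bool :=
  fun i => if h : i < n then d ⟨i, h⟩ else false

/-- The sign exponent ε: 1 iff i is even, i ≤ n - 2, d i = 1 and d (i+1) = 1. -/
def abrEps (n : ℕ) (d : ℕ → Bool) (i : ℕ) : ℕ :=
  if i % 2 = 0 ∧ i + 2 ≤ n ∧ d i = true ∧ d (i + 1) = true then 1 else 0

/-- ABR value of an n-bit string: ∑_{i<n} (-1)^{ε(i)} dᵢ Bᵢ. -/
def abrVal (n : ℕ) (d : ℕ → Bool) : ℤ :=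
  ∑ i ∈ Finset.range n, (-1) ^ abrEps n d i * (cond (d i) 1 0 : ℤ) * (abrB i : ℤ)


/-!
Let `S n` be the sum of the `B j` over odd `j < n`. The recursion reads `B n = 2^(n+1) - 1 - S n`,
and a joint induction gives `S (2k) = 4^k - 1` and `B (2k+1) = 3 * 4^k`: each odd term adds
`3 * 4^k` to the partial sum. Hence `B (2k+2) = 2^(2k+3) - 1 - (4^(k+1) - 1) = 4^(k+1)`.
-/

def abrOddSum (n : ℕ) : ℕ := ∑ j ∈ (Finset.range n).filter (fun j => j % 2 = 1), abrB j

lemma abrB_add_two (n : ℕ) : abrB (n + 2) = 2 ^ (n + 3) - 1 - abrOddSum (n + 2) := by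
  rw [abrB, abrOddSum, Finset.sum_attach]

lemma abrOddSum_succ (n : ℕ) :
    abrOddSum (n + 1) = abrOddSum n + if n % 2 = 1 then abrB n else 0 := by
  simp only [abrOddSum, Finset.sum_filter, Finset.sum_range_succ]

lemma abrOddSum_two_mul_add_one (k : ℕ) : abrOddSum (2 * k + 1) = abrOddSum (2 * k) := by
  simp [abrOddSum_succ]

lemma abrOddSum_two_mul_add_two (k : ℕ) :
    abrOddSum (2 * k + 2) = abrOddSum (2 * k) + abrB (2 * k + 1) := by
  rw [abrOddSum_succ, abrOddSum_two_mul_add_one, if_pos (by omega)]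

lemma abrB_two_mul_add_one_of_abrOddSum {k : ℕ} (hS : abrOddSum (2 * k) + 1 = 2 ^ (2 * k)) :
    abrB (2 * k + 1) = 3 * 2 ^ (2 * k) := by
  cases k with
  | zero => simp [abrB]
  | succ k =>
    rw [show 2 * (k + 1) + 1 = 2 * k + 1 + 2 by ring, abrB_add_two,
      show 2 * k + 1 + 2 = 2 * (k + 1) + 1 by ring, abrOddSum_two_mul_add_one]
    have hpow : 2 ^ (2 * k + 1 + 3) = 4 * 2 ^ (2 * (k + 1)) := by ring
    omega

lemma abrOddSum_two_mul_eq (k : ℕ) : abrOddSum (2 * k) + 1 = 2 ^ (2 * k) := by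
  induction k with
  | zero => rfl
  | succ k ih =>
    rw [show 2 * (k + 1) = 2 * k + 2 by ring, abrOddSum_two_mul_add_two,
      abrB_two_mul_add_one_of_abrOddSum ih]
    have hpow : 2 ^ (2 * k + 2) = 4 * 2 ^ (2 * k) := by ring
    omega

theorem abr_even_base (i : ℕ) (h2 : 2 ≤ i) (he : i % 2 = 0) :
    abrB i = 2 ^ i := by
  obtain ⟨k, rfl⟩ : ∃ k, i = 2 * (k + 1) := ⟨i / 2 - 1, by omega⟩
  have hS := abrOddSum_two_mul_eq (k + 1)
  rw [show 2 * (k + 1) = 2 * k + 2 by ring, abrB_add_two] at *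
  have hpow : 2 ^ (2 * k + 3) = 2 * 2 ^ (2 * k + 2) := by ring
  omega
end

section
/- For every i ≥ 3, the ABR base satisfies the recurrence B_i = 4 · B_{i-2}. -/
lemma abrB_eq_of_one_le {n : ℕ} (hn : 1 ≤ n) : abrB n = 2 ^ (n + 1) - 1 - abrOddSum n := by
  obtain _ | _ | n := n
  · omega
  · simp [abrB, abrOddSum, Finset.sum_filter]
  · rw [abrB, Finset.sum_attach, abrOddSum]

lemma abrOddSum_two_mul (m : ℕ) : abrOddSum (2 * m) + 1 = 4 ^ m := by
  induction m with
  | zero => rfl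
  | succ m ih =>
    have hodd : abrOddSum (2 * m + 1) = abrOddSum (2 * m) := by
      rw [abrOddSum_succ, if_neg (by omega), add_zero]
    have hB := abrB_eq_of_one_le (n := 2 * m + 1) (by omega)
    have hstep : abrOddSum (2 * (m + 1)) = abrOddSum (2 * m) + abrB (2 * m + 1) := by
      rw [show 2 * (m + 1) = 2 * m + 1 + 1 by ring, abrOddSum_succ, if_pos (by omega), hodd]
    have hpow : 2 ^ (2 * m + 1 + 1) = 4 * 4 ^ m := by rw [pow_succ, pow_succ, pow_mul]; ring
    rw [hstep, hB, hodd, hpow, pow_succ]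
    omega

lemma abrOddSum_add_one (n : ℕ) : abrOddSum n + 1 = 4 ^ (n / 2) := by
  obtain ⟨m, rfl | rfl⟩ := Nat.even_or_odd' n
  · rw [abrOddSum_two_mul, Nat.mul_div_cancel_left m two_pos]
  · rw [abrOddSum_succ, if_neg (by omega), add_zero, abrOddSum_two_mul]
    congr 1
    omega

lemma abrB_add_four_pow {n : ℕ} (hn : 1 ≤ n) : abrB n + 4 ^ (n / 2) = 2 ^ (n + 1) := by
  have hle : 4 ^ (n / 2) ≤ 2 ^ (n + 1) := by
    rw [show (4 : ℕ) = 2 ^ 2 by norm_num, ← pow_mul]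
    exact Nat.pow_le_pow_right two_pos (by omega)
  have := abrOddSum_add_one n
  rw [abrB_eq_of_one_le hn]
  omega

theorem abr_recurrence (i : ℕ) (h : 3 ≤ i) :
    abrB i = 4 * abrB (i - 2) := by
  obtain ⟨k, rfl⟩ : ∃ k, i = k + 2 := ⟨i - 2, by omega⟩
  have hi := abrB_add_four_pow (n := k + 2) (by omega)
  have hk := abrB_add_four_pow (n := k) (by omega)
  rw [show (k + 2) / 2 = k / 2 + 1 by omega, pow_succ, show k + 2 + 1 = k + 1 + 2 by ring,
    pow_add] at hi
  rw [Nat.add_sub_cancel]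
  omega
end

section
/- For every bit string d of length n ≥ 2, the ABR value v(d) = ∑_{i=0}^{n-1} (-1)^{ε(i)} d_i B_i satisfies 0 ≤ v(d) ≤ 2^n - 1. -/
/-! Closed form: `B (2k+1) = 3·4^k` and `B (2k) = 4^k` for `k ≥ 1` (while `B 0 = 2`). Hence the
bits at positions `2k, 2k+1` contribute `0`, `B (2k)`, `3·4^k` or `3·4^k - B (2k)`, all in
`[0, 3·4^k]`, so the first `2m` bits contribute a value in `[0, 4^m - 1]`. For odd `n = 2m+1` the
top bit is never negated and adds at most `B (2m) = 4^m`, which needs `m ≥ 1`. -/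

open Finset

lemma sum_range_filter_mod_two_eq_one {M : Type*} [AddCommMonoid M] (f : ℕ → M) (i : ℕ) :
    ∑ j ∈ (range i).filter (fun j => j % 2 = 1), f j = ∑ k ∈ range (i / 2), f (2 * k + 1) := by
  induction i with
  | zero => simp
  | succ i ih =>
    rw [range_add_one, filter_insert]
    obtain ⟨k, rfl | rfl⟩ := Nat.even_or_odd' i
    · rw [if_neg (by omega), ih, show (2 * k + 1) / 2 = 2 * k / 2 by omega]
    · rw [if_pos (by omega), sum_insert (by simp), ih, show (2 * k + 1 + 1) / 2 = k + 1 by omega,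
        show (2 * k + 1) / 2 = k by omega, sum_range_succ, add_comm]

lemma sum_range_three_mul_four_pow (m : ℕ) : ∑ k ∈ range m, 3 * 4 ^ k = 4 ^ m - 1 := by
  have h : (∑ k ∈ range m, 4 ^ k) * 3 + 1 = 4 ^ m := geom_sum_mul_add 3 m
  rw [← mul_sum]
  omega

lemma abrB_zero : abrB 0 = 2 := by rw [abrB]

lemma abrB_add_two_s7 (i : ℕ) :
    abrB (i + 2) = 2 ^ (i + 3) - 1 - ∑ k ∈ range (i / 2 + 1), abrB (2 * k + 1) := by
  rw [abrB, sum_attach ((range (i + 2)).filter fun j => j % 2 = 1) abrB,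
    sum_range_filter_mod_two_eq_one, show (i + 2) / 2 = i / 2 + 1 by omega]

lemma abrB_two_mul_add_one (k : ℕ) : abrB (2 * k + 1) = 3 * 4 ^ k := by
  induction k using Nat.strong_induction_on with
  | _ k ih =>
    rcases k with _ | k
    · rw [abrB]; rfl
    · rw [show 2 * (k + 1) + 1 = 2 * k + 1 + 2 by ring, abrB_add_two_s7,
        show (2 * k + 1) / 2 + 1 = k + 1 by omega,
        sum_congr rfl fun j hj => ih j (mem_range.mp hj), sum_range_three_mul_four_pow]
      have h16 : 2 ^ (2 * k + 1 + 3) = 16 * 4 ^ k := by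
        rw [show 2 * k + 1 + 3 = 2 * k + 4 by ring, pow_add, pow_mul, mul_comm]; rfl
      rw [h16, pow_succ]
      have := Nat.one_le_pow k 4 (by norm_num)
      omega

lemma abrB_two_mul {k : ℕ} (hk : k ≠ 0) : abrB (2 * k) = 4 ^ k := by
  obtain ⟨k, rfl⟩ := Nat.exists_eq_add_one_of_ne_zero hk
  rw [show 2 * (k + 1) = 2 * k + 2 by ring, abrB_add_two_s7,
    sum_congr rfl fun j _ => abrB_two_mul_add_one j, sum_range_three_mul_four_pow]
  have h8 : 2 ^ (2 * k + 3) = 8 * 4 ^ k := by rw [pow_add, pow_mul, mul_comm]; rfl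
  rw [show 2 * k / 2 + 1 = k + 1 by omega, h8, pow_succ]
  have := Nat.one_le_pow k 4 (by norm_num)
  omega

lemma abrB_two_mul_le (k : ℕ) : abrB (2 * k) ≤ 3 * 4 ^ k := by
  rcases eq_or_ne k 0 with rfl | hk
  · simp [abrB_zero]
  · rw [abrB_two_mul hk]; omega

def abrTerm (n : ℕ) (d : ℕ → Bool) (i : ℕ) : ℤ :=
  (-1) ^ abrEps n d i * (cond (d i) 1 0 : ℤ) * (abrB i : ℤ)

lemma abrVal_eq_sum_abrTerm (n : ℕ) (d : ℕ → Bool) :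
    abrVal n d = ∑ i ∈ range n, abrTerm n d i := rfl

lemma abrEps_two_mul_add_one (n : ℕ) (d : ℕ → Bool) (k : ℕ) : abrEps n d (2 * k + 1) = 0 :=
  if_neg fun h => by omega

lemma abrEps_of_le {n : ℕ} (d : ℕ → Bool) {i : ℕ} (h : n ≤ i + 1) : abrEps n d i = 0 :=
  if_neg fun h' => by omega

lemma abrTerm_pair_mem_Icc {n k : ℕ} (d : ℕ → Bool) (hk : 2 * k + 2 ≤ n) :
    abrTerm n d (2 * k) + abrTerm n d (2 * k + 1) ∈ Set.Icc 0 (3 * 4 ^ k) := by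
  have hB : (abrB (2 * k) : ℤ) ≤ 3 * 4 ^ k := mod_cast abrB_two_mul_le k
  have hεodd := abrEps_two_mul_add_one n d k
  have hεeven : abrEps n d (2 * k) = if d (2 * k) = true ∧ d (2 * k + 1) = true then 1 else 0 := by
    simp [abrEps, hk]
  simp only [abrTerm, hεodd, hεeven, abrB_two_mul_add_one]
  cases d (2 * k) <;> cases d (2 * k + 1) <;> simp <;> omega

lemma abrTerm_top_mem_Icc {m : ℕ} (hm : m ≠ 0) (d : ℕ → Bool) :
    abrTerm (2 * m + 1) d (2 * m) ∈ Set.Icc 0 (4 ^ m) := by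
  simp only [abrTerm, abrEps_of_le d le_rfl, abrB_two_mul hm]
  cases d (2 * m) <;> simp

lemma sum_range_two_mul_abrTerm_mem_Icc {n m : ℕ} (d : ℕ → Bool) (hm : 2 * m ≤ n) :
    ∑ i ∈ range (2 * m), abrTerm n d i ∈ Set.Icc 0 (4 ^ m - 1) := by
  induction m with
  | zero => simp
  | succ m ih =>
    obtain ⟨h0, h1⟩ := ih (by omega)
    obtain ⟨h2, h3⟩ := abrTerm_pair_mem_Icc d (k := m) (by omega)
    rw [show 2 * (m + 1) = 2 * m + 1 + 1 by ring, sum_range_succ, sum_range_succ, pow_succ]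
    constructor <;> linarith

theorem abr_val_range (n : ℕ) (hn : 2 ≤ n) (d : Fin n → Bool) :
    0 ≤ abrVal n (extBits n d) ∧ abrVal n (extBits n d) ≤ 2 ^ n - 1 := by
  rw [abrVal_eq_sum_abrTerm]
  have h4 : (2 : ℤ) ^ 2 = 4 := by norm_num
  obtain ⟨m, rfl | rfl⟩ := Nat.even_or_odd' n
  · rw [pow_mul, h4]
    exact sum_range_two_mul_abrTerm_mem_Icc _ le_rfl
  · obtain ⟨h0, h1⟩ :=
      sum_range_two_mul_abrTerm_mem_Icc (n := 2 * m + 1) (m := m) (extBits _ d) (by omega)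
    obtain ⟨h2, h3⟩ := abrTerm_top_mem_Icc (m := m) (by omega) (extBits _ d)
    rw [sum_range_succ, pow_succ, pow_mul, h4]
    constructor <;> linarith
end

section
/- For every n ≥ 2, the set of integers representable by n-bit ABR strings equals {0, 1, …, 2^n - 1}; equivalently the ABR evaluation map is a bijection from {0,1}^n onto {0, …, 2^n - 1}. -/
/-! For even `m` the odd-indexed `B j` with `j < m` sum to `2 ^ m - 1`, which forces
`B (m + 1) = 3 * 2 ^ m`, and `B m = 2 ^ m` when `m ≠ 0`. So for `m ≥ 2` the bits
`(d m, d (m + 1))` contribute `c * 2 ^ m` with `c = 0, 1, 3, 2` for `(0,0), (1,0), (0,1), (1,1)`,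
while `(d 0, d 1)` contributes `0, 2, 3, 1`. An ABR string is thus a base-4 numeral whose digits
are permuted bit pairs, followed by one binary digit when `n` is odd, and such numerals represent
`[0, 2 ^ n)` bijectively. -/

open Finset

lemma abrB_add_two_s9 (n : ℕ) :
    abrB (n + 2) = 2 ^ (n + 3) - 1 - ∑ j ∈ range (n + 2), if j % 2 = 1 then abrB j else 0 := by
  rw [abrB, sum_attach _ abrB, sum_filter]

lemma abrB_succ_of_sum_eq {m : ℕ} (hm : Even m)
    (hsum : (∑ j ∈ range m, if j % 2 = 1 then abrB j else 0) + 1 = 2 ^ m) :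
    abrB (m + 1) = 3 * 2 ^ m := by
  rcases eq_or_ne m 0 with rfl | hm0
  · simp [abrB]
  obtain ⟨j, rfl⟩ : ∃ j, m = j + 2 := ⟨m - 2, by grind⟩
  rw [Nat.even_iff] at hm
  rw [show j + 2 + 1 = j + 1 + 2 by ring, abrB_add_two_s9, sum_range_succ, if_neg (by omega),
    add_zero, show j + 1 + 3 = j + 2 + 2 by ring, pow_add]
  omega

lemma sum_abrB_odd_add_one {m : ℕ} (hm : Even m) :
    (∑ j ∈ range m, if j % 2 = 1 then abrB j else 0) + 1 = 2 ^ m := by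
  obtain ⟨k, rfl⟩ := hm
  induction k with
  | zero => rfl
  | succ k ih =>
    rw [show k + 1 + (k + 1) = k + k + 1 + 1 by ring, sum_range_succ, sum_range_succ,
      if_neg (by omega), if_pos (by omega), abrB_succ_of_sum_eq ⟨k, rfl⟩ ih, pow_succ, pow_succ]
    omega

lemma abrB_succ_of_even {m : ℕ} (hm : Even m) : abrB (m + 1) = 3 * 2 ^ m :=
  abrB_succ_of_sum_eq hm (sum_abrB_odd_add_one hm)

lemma abrB_of_even {m : ℕ} (hm : Even m) (h0 : m ≠ 0) : abrB m = 2 ^ m := by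
  obtain ⟨j, rfl⟩ : ∃ j, m = j + 2 := ⟨m - 2, by grind⟩
  have := sum_abrB_odd_add_one hm
  rw [abrB_add_two_s9, pow_succ]
  omega

lemma abrEps_of_lt {m n i : ℕ} (hm : Even m) (hi : i < m) (hmn : m ≤ n) (d : ℕ → Bool) :
    abrEps n d i = abrEps m d i := by
  rw [Nat.even_iff] at hm
  unfold abrEps
  grind

lemma abrVal_add {m : ℕ} (hm : Even m) (k : ℕ) (d : ℕ → Bool) :
    abrVal (m + k) d = abrVal m d + ∑ i ∈ range k,
      (-1) ^ abrEps (m + k) d (m + i) * (cond (d (m + i)) 1 0 : ℤ) * (abrB (m + i) : ℤ) := by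
  rw [abrVal, sum_range_add, abrVal]
  congr 1
  refine sum_congr rfl fun i hi => ?_
  rw [abrEps_of_lt hm (mem_range.mp hi) (by omega)]

lemma abrVal_add_one {m : ℕ} (hm : Even m) (hm0 : m ≠ 0) (d : ℕ → Bool) :
    abrVal (m + 1) d = abrVal m d + cond (d m) 1 0 * 2 ^ m := by
  have hε : abrEps (m + 1) d m = 0 := if_neg (by omega)
  simp [abrVal_add hm, hε, abrB_of_even hm hm0]

def abrPairDigit (m : ℕ) (a b : Bool) : ℤ :=
  if m = 0 then cond a (cond b 1 2) (cond b 3 0) else cond a (cond b 2 1) (cond b 3 0)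

lemma abrPairDigit_injective (m : ℕ) :
    Function.Injective (Function.uncurry (abrPairDigit m)) := by
  unfold abrPairDigit
  split_ifs <;> decide

lemma abrPairDigit_mem (m : ℕ) (a b : Bool) :
    0 ≤ abrPairDigit m a b ∧ abrPairDigit m a b < 4 := by
  unfold abrPairDigit
  split_ifs <;> cases a <;> cases b <;> decide

lemma abrVal_add_two {m : ℕ} (hm : Even m) (d : ℕ → Bool) :
    abrVal (m + 2) d = abrVal m d + abrPairDigit m (d m) (d (m + 1)) * 2 ^ m := by
  have hε₀ : abrEps (m + 2) d m = if d m = true ∧ d (m + 1) = true then 1 else 0 := by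
    unfold abrEps; rw [Nat.even_iff] at hm; grind
  have hε₁ : abrEps (m + 2) d (m + 1) = 0 := by
    unfold abrEps; rw [Nat.even_iff] at hm; grind
  rw [abrVal_add hm, sum_range_succ, sum_range_one, add_zero, hε₀, hε₁, abrB_succ_of_even hm,
    abrPairDigit]
  rcases eq_or_ne m 0 with rfl | hm0
  · cases d 0 <;> cases d (0 + 1) <;> simp [abrB]
  · rw [abrB_of_even hm hm0, if_neg hm0]
    cases d m <;> cases d (m + 1) <;> simp
    ring

lemma Int.eq_and_eq_of_add_mul_eq {N x y a b : ℤ} (hx₀ : 0 ≤ x) (hx : x < N) (hy₀ : 0 ≤ y)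
    (hy : y < N) (h : x + a * N = y + b * N) : x = y ∧ a = b := by
  have hab : a = b := by
    have key (z c : ℤ) (hz₀ : 0 ≤ z) (hz : z < N) : (z + c * N) / N = c := by
      rw [Int.add_mul_ediv_right _ _ (by omega), Int.ediv_eq_zero_of_lt hz₀ hz, zero_add]
    rw [← key x a hx₀ hx, h, key y b hy₀ hy]
  subst hab
  exact ⟨by linarith, rfl⟩

@[elab_as_elim]
theorem Nat.induction_skipping_one {P : ℕ → Prop} (zero : P 0)
    (add_two : ∀ m, Even m → P m → P (m + 2))
    (add_one : ∀ m, Even m → m ≠ 0 → P m → P (m + 1)) {n : ℕ} (hn : n ≠ 1) : P n := by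
  have even : ∀ k, P (2 * k) := fun k => by
    induction k with
    | zero => exact zero
    | succ k ih => exact add_two _ (even_two_mul k) ih
  obtain ⟨k, rfl | rfl⟩ := Nat.even_or_odd' n
  · exact even k
  · exact add_one _ (even_two_mul k) (by omega) (even k)

lemma abrVal_mem_Ico {n : ℕ} (hn : n ≠ 1) : ∀ d, abrVal n d ∈ Set.Ico 0 (2 ^ n) := by
  refine Nat.induction_skipping_one ?_ (fun m hm ih d => ?_) (fun m hm hm0 ih d => ?_) hn
  · simp [abrVal]
  · obtain ⟨hd₀, hd⟩ := abrPairDigit_mem m (d m) (d (m + 1))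
    obtain ⟨hv₀, hv⟩ := ih d
    rw [abrVal_add_two hm, pow_add]
    constructor <;> nlinarith
  · obtain ⟨hv₀, hv⟩ := ih d
    rw [abrVal_add_one hm hm0, pow_succ]
    cases d m <;> constructor <;> simp <;> linarith

lemma abrVal_add_mul_two_pow_inj {m : ℕ} (hm : Even m) {d d' : ℕ → Bool} {a b : ℤ}
    (h : abrVal m d + a * 2 ^ m = abrVal m d' + b * 2 ^ m) : abrVal m d = abrVal m d' ∧ a = b :=
  have hm1 : m ≠ 1 := by rintro rfl; exact Nat.not_even_one hm
  Int.eq_and_eq_of_add_mul_eq (abrVal_mem_Ico hm1 d).1 (abrVal_mem_Ico hm1 d).2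
    (abrVal_mem_Ico hm1 d').1 (abrVal_mem_Ico hm1 d').2 h

lemma eq_of_abrVal_eq {n : ℕ} (hn : n ≠ 1) :
    ∀ d d', abrVal n d = abrVal n d' → ∀ i < n, d i = d' i := by
  refine Nat.induction_skipping_one ?_ (fun m hm ih d d' h => ?_) (fun m hm hm0 ih d d' h => ?_) hn
  · simp
  · rw [abrVal_add_two hm, abrVal_add_two hm] at h
    obtain ⟨hlow, hdigit⟩ := abrVal_add_mul_two_pow_inj hm h
    obtain ⟨hm', hm1'⟩ := Prod.ext_iff.mp (abrPairDigit_injective m (a₁ := (d m, d (m + 1)))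
      (a₂ := (d' m, d' (m + 1))) hdigit)
    intro i hi
    obtain hi | rfl | rfl : i < m ∨ i = m ∨ i = m + 1 := by omega
    exacts [ih d d' hlow i hi, hm', hm1']
  · rw [abrVal_add_one hm hm0, abrVal_add_one hm hm0] at h
    obtain ⟨hlow, hdigit⟩ := abrVal_add_mul_two_pow_inj hm h
    intro i hi
    obtain hi | rfl : i < m ∨ i = m := by omega
    · exact ih d d' hlow i hi
    · revert hdigit; cases d i <;> cases d' i <;> simp

theorem abr_val_bijection (n : ℕ) (hn : 2 ≤ n) :
    (Set.range fun d : Fin n → Bool => abrVal n (extBits n d)) =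
      Set.Icc (0 : ℤ) (2 ^ n - 1) ∧
    Function.Injective (fun d : Fin n → Bool => abrVal n (extBits n d)) := by
  set f := fun d : Fin n → Bool => abrVal n (extBits n d)
  have hn1 : n ≠ 1 := by omega
  have hinj : Function.Injective f :=
    fun d d' h => funext fun i => by simpa [extBits] using eq_of_abrVal_eq hn1 _ _ h i i.2
  have hsub : Set.range f ⊆ Set.Icc 0 (2 ^ n - 1) := by
    rintro _ ⟨d, rfl⟩
    obtain ⟨h₀, h⟩ := abrVal_mem_Ico hn1 (extBits n d)
    exact ⟨h₀, Int.le_sub_one_of_lt h⟩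
  refine ⟨Set.eq_of_subset_of_ncard_le hsub ?_ (Set.finite_Icc _ _), hinj⟩
  rw [Set.ncard_range_of_injective hinj, ← Finset.coe_Icc, Set.ncard_coe_finset, Int.card_Icc]
  simp
end
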